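/- arXiv:2209.10202 — 2 statements merged into one kernel-verified Lean document; each statement's English description precedes it below -/
import Mathlib

section
/- Let H be a real Hilbert space, Q ⊆ H a nonempty closed convex set, ν > 0, A : Q → H a ν-inverse strongly monotone operator, S : Q → Q a nonexpansive mapping, f : Q → Q a contraction with coefficient ρ ∈ [0,1), 0 < a < b < 2ν, and λ : (0,1] → [a,b]. Assume Ω = Fix(S) ∩ S_VI(A,Q) is nonempty, and for each t ∈ (0,1] let x_t ∈ Q be the unique point with x_t = t·f(x_t) + (1 − t)·S(P_Q(x_t − λ(t)·A x_t)). Then ‖x_t − S x_t‖ → 0 as t → 0⁺. -/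
/-!
Fix `p ∈ Ω` and put `y_t = P_Q (x_t - λ_t A x_t)`. Since `P_Q` is firmly nonexpansive and fixes
`p - λ A p`, inverse strong monotonicity of `A` yields the energy inequality
`λ(2ν - λ)‖A x_t - A p‖² + ‖(x_t - y_t) - λ(A x_t - A p)‖² ≤ ‖x_t - p‖² - ‖y_t - p‖²`.
The defining equation keeps `x_t` within `M = ‖f p - p‖ / (1 - ρ)` of `p` and makes the right-hand
side `O(t)`, so `‖x_t - y_t‖ = O(√t)`, while `‖x_t - S y_t‖ = t ‖f x_t - S y_t‖ = O(t)`. As `S` is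
nonexpansive, `‖x_t - S x_t‖ ≤ ‖x_t - S y_t‖ + ‖y_t - x_t‖ = O(√t)`.
-/

open scoped RealInnerProductSpace
open Filter Topology Set

section ConvexCombination

variable {E : Type*} [SeminormedAddCommGroup E] [NormedSpace ℝ E] {x z s p : E} {t : ℝ}

theorem norm_sub_le_of_eq_smul_add_smul (ht0 : 0 ≤ t) (ht1 : t ≤ 1)
    (hx : x = t • z + (1 - t) • s) : ‖x - p‖ ≤ t * ‖z - p‖ + (1 - t) * ‖s - p‖ := by
  have e : x - p = t • (z - p) + (1 - t) • (s - p) := by rw [hx]; module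
  rw [e]
  refine (norm_add_le _ _).trans_eq ?_
  rw [norm_smul, norm_smul, Real.norm_of_nonneg ht0, Real.norm_of_nonneg (by linarith)]

theorem norm_sub_le_div_of_eq_smul_add_smul {ρ c : ℝ} (ht0 : 0 < t) (ht1 : t ≤ 1) (hρ : ρ < 1)
    (hx : x = t • z + (1 - t) • s) (hz : ‖z - p‖ ≤ ρ * ‖x - p‖ + c) (hs : ‖s - p‖ ≤ ‖x - p‖) :
    ‖x - p‖ ≤ c / (1 - ρ) := by
  have hconv := norm_sub_le_of_eq_smul_add_smul (p := p) ht0.le ht1 hx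
  have ht : t * ((1 - ρ) * ‖x - p‖) ≤ t * c := by nlinarith
  rw [le_div_iff₀ (by linarith)]
  linarith [le_of_mul_le_mul_left ht ht0]

theorem norm_sub_right_le_of_eq_smul_add_smul {M : ℝ} (ht0 : 0 ≤ t)
    (hx : x = t • z + (1 - t) • s) (hz : ‖z - p‖ ≤ M) (hs : ‖s - p‖ ≤ M) :
    ‖x - s‖ ≤ 2 * M * t := by
  have e : x - s = t • (z - s) := by rw [hx]; module
  rw [e, norm_smul, Real.norm_of_nonneg ht0]
  nlinarith [norm_sub_le_norm_sub_add_norm_sub z p s, norm_sub_rev p s]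

theorem sq_norm_sub_sub_sq_le_of_eq_smul_add_smul {M r : ℝ} (ht0 : 0 ≤ t) (ht1 : t ≤ 1)
    (hx : x = t • z + (1 - t) • s) (hz : ‖z - p‖ ≤ M) (hs : ‖s - p‖ ≤ r)
    (hr : r ≤ ‖x - p‖) (hxM : ‖x - p‖ ≤ M) :
    ‖x - p‖ ^ 2 - r ^ 2 ≤ 2 * M ^ 2 * t := by
  have hconv := norm_sub_le_of_eq_smul_add_smul (p := p) ht0 ht1 hx
  have hr0 : 0 ≤ r := (norm_nonneg _).trans hs
  have hdiff : ‖x - p‖ - r ≤ M * t := by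
    nlinarith [mul_le_mul_of_nonneg_left hz ht0,
      mul_le_mul_of_nonneg_left hs (by linarith : 0 ≤ 1 - t)]
  nlinarith [mul_le_mul hdiff (add_le_add hxM (hr.trans hxM)) (by positivity)
    (mul_nonneg (hxM.trans' (norm_nonneg _)) ht0)]

theorem norm_le_of_mul_sq_add_sq_le {d w : E} {κ l b D : ℝ} (hκ : 0 < κ) (hl : 0 ≤ l)
    (hlb : l ≤ b) (h : κ * ‖w‖ ^ 2 + ‖d - l • w‖ ^ 2 ≤ D) :
    ‖d‖ ≤ (1 + b / √κ) * √D := by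
  have hdw : ‖d - l • w‖ ≤ √D := Real.le_sqrt_of_sq_le (by nlinarith [norm_nonneg w])
  have hw : ‖w‖ ≤ √D / √κ := by
    rw [le_div_iff₀ (Real.sqrt_pos.mpr hκ)]
    refine Real.le_sqrt_of_sq_le ?_
    rw [mul_pow, Real.sq_sqrt hκ.le]
    nlinarith [norm_nonneg (d - l • w)]
  calc ‖d‖ = ‖(d - l • w) + l • w‖ := by rw [sub_add_cancel]
    _ ≤ ‖d - l • w‖ + ‖l • w‖ := norm_add_le _ _
    _ = ‖d - l • w‖ + l * ‖w‖ := by rw [norm_smul, Real.norm_of_nonneg hl]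
    _ ≤ √D + b * (√D / √κ) := by gcongr; linarith
    _ = (1 + b / √κ) * √D := by ring

end ConvexCombination

theorem norm_sub_smul_sq_le_of_inner {E : Type*} [NormedAddCommGroup E] [InnerProductSpace ℝ E]
    {ν l : ℝ} {e w : E} (hl : 0 ≤ l) (h : ν * ‖w‖ ^ 2 ≤ ⟪w, e⟫) :
    ‖e - l • w‖ ^ 2 ≤ ‖e‖ ^ 2 - l * (2 * ν - l) * ‖w‖ ^ 2 := by
  rw [norm_sub_sq_real, real_inner_smul_right, norm_smul, mul_pow, Real.norm_eq_abs, sq_abs,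
    real_inner_comm]
  nlinarith [mul_le_mul_of_nonneg_left h hl]

section ProjectedGradient

variable {H : Type*} [NormedAddCommGroup H] [InnerProductSpace ℝ H] {Q : Set H} {P : H → H}

theorem sq_norm_proj_sub_add_sq_norm_sub_le (hPmem : ∀ x, P x ∈ Q)
    (hP : ∀ x, ∀ y ∈ Q, ⟪x - P x, y - P x⟫ ≤ 0) (u v : H) :
    ‖P u - P v‖ ^ 2 + ‖(u - v) - (P u - P v)‖ ^ 2 ≤ ‖u - v‖ ^ 2 := by
  have hu := hP u (P v) (hPmem v)
  have hv := hP v (P u) (hPmem u)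
  have hcross : 0 ≤ ⟪P u - P v, (u - v) - (P u - P v)⟫ := by
    have e : ⟪P u - P v, (u - v) - (P u - P v)⟫
        = -⟪u - P u, P v - P u⟫ - ⟪v - P v, P u - P v⟫ := by
      simp only [inner_sub_left, inner_sub_right, real_inner_comm]
      ring
    linarith
  have h := norm_add_sq_real (P u - P v) ((u - v) - (P u - P v))
  rw [add_sub_cancel] at h
  linarith

theorem proj_sub_smul_eq_self (hPmem : ∀ x, P x ∈ Q)
    (hP : ∀ x, ∀ y ∈ Q, ⟪x - P x, y - P x⟫ ≤ 0) {A : H → H} {p : H} (hp : p ∈ Q)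
    (hVI : ∀ z ∈ Q, 0 ≤ ⟪A p, z - p⟫) {l : ℝ} (hl : 0 ≤ l) :
    P (p - l • A p) = p := by
  set q := P (p - l • A p)
  have hproj := hP (p - l • A p) p hp
  have e : ⟪(p - l • A p) - q, p - q⟫ = ‖p - q‖ ^ 2 + l * ⟪A p, q - p⟫ := by
    rw [← real_inner_self_eq_norm_sq]
    simp only [inner_sub_left, inner_sub_right, real_inner_smul_left]
    ring
  have hsq : ‖p - q‖ ^ 2 ≤ 0 := by nlinarith [mul_nonneg hl (hVI q (hPmem _))]
  have : ‖p - q‖ = 0 := by nlinarith [norm_nonneg (p - q)]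
  exact (sub_eq_zero.mp (norm_eq_zero.mp this)).symm

theorem proj_gradient_energy_le (hPmem : ∀ x, P x ∈ Q)
    (hP : ∀ x, ∀ y ∈ Q, ⟪x - P x, y - P x⟫ ≤ 0) {A : H → H} {ν l : ℝ} {x p : H} (hp : p ∈ Q)
    (hVI : ∀ z ∈ Q, 0 ≤ ⟪A p, z - p⟫) (hl : 0 ≤ l)
    (hA : ν * ‖A x - A p‖ ^ 2 ≤ ⟪A x - A p, x - p⟫) :
    l * (2 * ν - l) * ‖A x - A p‖ ^ 2 + ‖(x - P (x - l • A x)) - l • (A x - A p)‖ ^ 2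
      ≤ ‖x - p‖ ^ 2 - ‖P (x - l • A x) - p‖ ^ 2 := by
  have hfirm := sq_norm_proj_sub_add_sq_norm_sub_le hPmem hP (x - l • A x) (p - l • A p)
  rw [proj_sub_smul_eq_self hPmem hP hp hVI hl,
    show (x - l • A x) - (p - l • A p) = (x - p) - l • (A x - A p) by module,
    show (x - p) - l • (A x - A p) - (P (x - l • A x) - p)
      = (x - P (x - l • A x)) - l • (A x - A p) by abel] at hfirm
  linarith [norm_sub_smul_sq_le_of_inner hl hA]

theorem norm_sub_apply_self_le_of_viscosity_eq (hPmem : ∀ x, P x ∈ Q)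
    (hP : ∀ x, ∀ y ∈ Q, ⟪x - P x, y - P x⟫ ≤ 0) {A S f : H → H} {ν ρ a b l t : ℝ} {x p : H}
    (hS : ∀ x ∈ Q, ∀ y ∈ Q, ‖S x - S y‖ ≤ ‖x - y‖) (hρ : ρ ∈ Ico (0 : ℝ) 1)
    (ha : 0 < a) (hb : b < 2 * ν) (hl : l ∈ Icc a b) (ht : t ∈ Ioc (0 : ℝ) 1)
    (hp : p ∈ Q) (hSp : S p = p) (hVI : ∀ z ∈ Q, 0 ≤ ⟪A p, z - p⟫) (hxQ : x ∈ Q)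
    (hA : ν * ‖A x - A p‖ ^ 2 ≤ ⟪A x - A p, x - p⟫) (hf : ‖f x - f p‖ ≤ ρ * ‖x - p‖)
    (hx : x = t • f x + (1 - t) • S (P (x - l • A x))) :
    ‖x - S x‖ ≤ 2 * (‖f p - p‖ / (1 - ρ)) * t
      + (1 + b / √(a * (2 * ν - b))) * √(2 * (‖f p - p‖ / (1 - ρ)) ^ 2 * t) := by
  obtain ⟨hρ0, hρ1⟩ := hρ
  obtain ⟨ht0, ht1⟩ := ht
  obtain ⟨hla, hlb⟩ := hl
  set M := ‖f p - p‖ / (1 - ρ) with hM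
  set y := P (x - l • A x)
  have hl0 : 0 ≤ l := ha.le.trans hla
  have henergy := proj_gradient_energy_le hPmem hP hp hVI hl0 hA
  have hyp : ‖y - p‖ ≤ ‖x - p‖ := by
    refine (pow_le_pow_iff_left₀ (norm_nonneg _) (norm_nonneg _) two_ne_zero).mp ?_
    nlinarith [mul_nonneg (mul_nonneg hl0 (by linarith : 0 ≤ 2 * ν - l)) (sq_nonneg ‖A x - A p‖),
      sq_nonneg ‖(x - y) - l • (A x - A p)‖]
  have hSyp : ‖S y - p‖ ≤ ‖y - p‖ := by simpa only [hSp] using hS y (hPmem _) p hp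
  have hfxp : ‖f x - p‖ ≤ ρ * ‖x - p‖ + ‖f p - p‖ := by
    linarith [norm_sub_le_norm_sub_add_norm_sub (f x) (f p) p]
  have hxp : ‖x - p‖ ≤ M :=
    norm_sub_le_div_of_eq_smul_add_smul ht0 ht1 hρ1 hx hfxp (hSyp.trans hyp)
  have hfxM : ‖f x - p‖ ≤ M := by
    have : ρ * M + ‖f p - p‖ = M := by rw [hM]; field_simp; ring
    nlinarith
  have hxSy : ‖x - S y‖ ≤ 2 * M * t :=
    norm_sub_right_le_of_eq_smul_add_smul ht0.le hx hfxM (hSyp.trans (hyp.trans hxp))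
  have hgap : ‖x - p‖ ^ 2 - ‖y - p‖ ^ 2 ≤ 2 * M ^ 2 * t :=
    sq_norm_sub_sub_sq_le_of_eq_smul_add_smul ht0.le ht1 hx hfxM hSyp hyp hxp
  have hκ : a * (2 * ν - b) ≤ l * (2 * ν - l) := by nlinarith
  have hxy : ‖x - y‖ ≤ (1 + b / √(a * (2 * ν - b))) * √(2 * M ^ 2 * t) := by
    refine norm_le_of_mul_sq_add_sq_le (w := A x - A p) (mul_pos ha (by linarith)) hl0 hlb ?_
    linarith [mul_le_mul_of_nonneg_right hκ (sq_nonneg ‖A x - A p‖)]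
  calc ‖x - S x‖ ≤ ‖x - S y‖ + ‖S y - S x‖ := norm_sub_le_norm_sub_add_norm_sub _ _ _
    _ ≤ 2 * M * t + ‖y - x‖ := add_le_add hxSy (hS _ (hPmem _) _ hxQ)
    _ ≤ _ := by rw [norm_sub_rev]; gcongr

end ProjectedGradient

theorem stmt_11_general {H : Type*} [NormedAddCommGroup H] [InnerProductSpace ℝ H]
    (Q : Set H)
    (ν : ℝ)
    (A : H → H) (hA : ∀ x ∈ Q, ∀ y ∈ Q, ν * ‖A x - A y‖ ^ 2 ≤ ⟪A x - A y, x - y⟫)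
    (P : H → H) (hPmem : ∀ x, P x ∈ Q)
    (hP : ∀ (x : H), ∀ y ∈ Q, ⟪x - P x, y - P x⟫ ≤ 0)
    (S : H → H)
    (hS : ∀ x ∈ Q, ∀ y ∈ Q, ‖S x - S y‖ ≤ ‖x - y‖)
    (ρ : ℝ) (hρ : ρ ∈ Set.Ico (0 : ℝ) 1)
    (f : H → H)
    (hf : ∀ x ∈ Q, ∀ y ∈ Q, ‖f x - f y‖ ≤ ρ * ‖x - y‖)
    (a b : ℝ) (hab : 0 < a ∧ a < b ∧ b < 2 * ν)
    (lam : ℝ → ℝ) (hlam : ∀ t ∈ Set.Ioc (0 : ℝ) 1, lam t ∈ Set.Icc a b)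
    (Ω : Set H)
    (hΩ : Ω = {x : H | x ∈ Q ∧ S x = x} ∩ {q : H | q ∈ Q ∧ ∀ x ∈ Q, 0 ≤ ⟪A q, x - q⟫})
    (hΩne : Ω.Nonempty)
    (x : ℝ → H) (hxQ : ∀ t ∈ Set.Ioc (0 : ℝ) 1, x t ∈ Q)
    (hx : ∀ t ∈ Set.Ioc (0 : ℝ) 1,
      x t = t • f (x t) + (1 - t) • S (P (x t - lam t • A (x t)))) :
    Filter.Tendsto (fun t => ‖x t - S (x t)‖)
      (nhdsWithin 0 (Set.Ioi (0 : ℝ))) (nhds 0) := by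
  obtain ⟨p, ⟨hpQ, hSp⟩, -, hpVI⟩ := hΩ ▸ hΩne
  set M := ‖f p - p‖ / (1 - ρ)
  set K := 1 + b / √(a * (2 * ν - b))
  have hbound : ∀ t ∈ Ioc (0 : ℝ) 1, ‖x t - S (x t)‖ ≤ 2 * M * t + K * √(2 * M ^ 2 * t) :=
    fun t ht ↦ norm_sub_apply_self_le_of_viscosity_eq hPmem hP hS hρ hab.1 hab.2.2 (hlam t ht) ht
      hpQ hSp hpVI (hxQ t ht) (hA _ (hxQ t ht) p hpQ) (hf _ (hxQ t ht) p hpQ) (hx t ht)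
  have hlim : Tendsto (fun t ↦ 2 * M * t + K * √(2 * M ^ 2 * t)) (𝓝[>] 0) (𝓝 0) := by
    have hcont : Continuous fun t ↦ 2 * M * t + K * √(2 * M ^ 2 * t) := by fun_prop
    simpa using (hcont.tendsto 0).mono_left nhdsWithin_le_nhds
  refine squeeze_zero' (Eventually.of_forall fun t ↦ norm_nonneg _) ?_ hlim
  filter_upwards [Ioc_mem_nhdsGT one_pos] with t ht using hbound t ht

/-- `‖x_t - S x_t‖ → 0` as `t → 0⁺`. -/
theorem stmt_11 {H : Type*} [NormedAddCommGroup H] [InnerProductSpace ℝ H] [CompleteSpace H]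
    (Q : Set H) (hQne : Q.Nonempty) (hQclosed : IsClosed Q) (hQconvex : Convex ℝ Q)
    (ν : ℝ) (hν : 0 < ν)
    (A : H → H) (hA : ∀ x ∈ Q, ∀ y ∈ Q, ν * ‖A x - A y‖ ^ 2 ≤ ⟪A x - A y, x - y⟫)
    (P : H → H) (hPmem : ∀ x, P x ∈ Q)
    (hP : ∀ (x : H), ∀ y ∈ Q, ⟪x - P x, y - P x⟫ ≤ 0)
    (S : H → H) (hSmem : ∀ x ∈ Q, S x ∈ Q)
    (hS : ∀ x ∈ Q, ∀ y ∈ Q, ‖S x - S y‖ ≤ ‖x - y‖)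
    (ρ : ℝ) (hρ : ρ ∈ Set.Ico (0 : ℝ) 1)
    (f : H → H) (hfmem : ∀ x ∈ Q, f x ∈ Q)
    (hf : ∀ x ∈ Q, ∀ y ∈ Q, ‖f x - f y‖ ≤ ρ * ‖x - y‖)
    (a b : ℝ) (hab : 0 < a ∧ a < b ∧ b < 2 * ν)
    (lam : ℝ → ℝ) (hlam : ∀ t ∈ Set.Ioc (0 : ℝ) 1, lam t ∈ Set.Icc a b)
    (Ω : Set H)
    (hΩ : Ω = {x : H | x ∈ Q ∧ S x = x} ∩ {q : H | q ∈ Q ∧ ∀ x ∈ Q, 0 ≤ ⟪A q, x - q⟫})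
    (hΩne : Ω.Nonempty)
    (x : ℝ → H) (hxQ : ∀ t ∈ Set.Ioc (0 : ℝ) 1, x t ∈ Q)
    (hx : ∀ t ∈ Set.Ioc (0 : ℝ) 1,
      x t = t • f (x t) + (1 - t) • S (P (x t - lam t • A (x t)))) :
    Filter.Tendsto (fun t => ‖x t - S (x t)‖)
      (nhdsWithin 0 (Set.Ioi (0 : ℝ))) (nhds 0) :=
  stmt_11_general Q ν A hA P hPmem hP S hS ρ hρ f hf a b hab lam hlam Ω hΩ hΩne x hxQ hx
end

section
/- Let H be a real Hilbert space, Q ⊆ H a nonempty closed convex set, ν > 0, A : Q → H a ν-inverse strongly monotone operator, S : Q → Q a nonexpansive mapping, and f : Q → Q a contraction with coefficient ρ ∈ [0,1). Assume Ω = Fix(S) ∩ S_VI(A,Q) is nonempty. Let {α_n} ⊆ (0,1] and {λ_n} ⊆ [a,b] with 0 < a < b < 2ν be sequences such that α_n → 0, ∑ α_n = +∞, ∑ |α_{n+1} − α_n| < ∞ and ∑ |λ_{n+1} − λ_n| < ∞. Let x_1 ∈ Q and x_{n+1} = α_n·f(x_n) + (1 − α_n)·S(P_Q(x_n − λ_n·A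 x_n)). Then for every q ∈ Ω, ‖A x_n − A q‖ → 0 as n → ∞. -/
/-!
For `q ∈ Ω` and `t ∈ [0, 2ν]`, the step `T_t u = S (P_Q (u - t A u))` fixes `q` and satisfies
`‖T_t u - q‖² ≤ ‖u - q‖² - t (2ν - t) ‖A u - A q‖²`, since `P_Q` and `S` are nonexpansive and
`A` is `ν`-inverse strongly monotone. Hence the iterates are bounded, and the bounded variation
of `α_n` and `λ_n` gives `s_{n+1} ≤ (1 - (1 - ρ) α_{n+1}) s_n + δ_n` for `s_n = ‖x_{n+1} - x_n‖`
with summable `δ_n`, so `s_n → 0` by Xu's lemma. Comparing `‖x_{n+1} - q‖²` with `‖x_n - q‖²`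
then gives `a (2ν - b) ‖A x_n - A q‖² ≤ 2M s_n + M² α_n` for a bound `M` of the iterates.
-/

open scoped RealInnerProductSpace
open Filter Finset Topology

section RealSequences

theorem le_prod_mul_add_sum_Ico {s γ δ : ℕ → ℝ} (hγ0 : ∀ n, 0 ≤ γ n) (hγ1 : ∀ n, γ n ≤ 1)
    (hδ0 : ∀ n, 0 ≤ δ n) (hrec : ∀ n, s (n + 1) ≤ (1 - γ n) * s n + δ n) {m n : ℕ}
    (hmn : m ≤ n) :
    s n ≤ (∏ k ∈ Ico m n, (1 - γ k)) * s m + ∑ k ∈ Ico m n, δ k := by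
  induction n, hmn using Nat.le_induction with
  | base => simp
  | succ n hmn ih =>
    rw [prod_Ico_succ_top hmn, sum_Ico_succ_top hmn]
    have hsum : 0 ≤ ∑ k ∈ Ico m n, δ k := sum_nonneg fun k _ => hδ0 k
    nlinarith [hrec n, hγ0 n, mul_le_mul_of_nonneg_left ih (sub_nonneg.2 (hγ1 n))]

theorem tendsto_prod_Ico_one_sub_nhds_zero {γ : ℕ → ℝ} (hγ1 : ∀ n, γ n ≤ 1)
    (hγ : Tendsto (fun N => ∑ n ∈ range N, γ n) atTop atTop) (m : ℕ) :
    Tendsto (fun n => ∏ k ∈ Ico m n, (1 - γ k)) atTop (𝓝 0) := by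
  have hsum : Tendsto (fun n => ∑ k ∈ Ico m n, γ k) atTop atTop := by
    refine (tendsto_atTop_add_const_right _ (-∑ k ∈ range m, γ k) hγ).congr' ?_
    filter_upwards [eventually_ge_atTop m] with n hn
    rw [sum_Ico_eq_sub _ hn, sub_eq_add_neg]
  refine squeeze_zero (fun n => prod_nonneg fun k _ => sub_nonneg.2 (hγ1 k)) (fun n => ?_)
    (Real.tendsto_exp_atBot.comp (tendsto_neg_atTop_atBot.comp hsum))
  calc ∏ k ∈ Ico m n, (1 - γ k) ≤ ∏ k ∈ Ico m n, Real.exp (-γ k) :=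
        prod_le_prod (fun k _ => sub_nonneg.2 (hγ1 k))
          (fun k _ => by linarith [Real.add_one_le_exp (-γ k)])
    _ = Real.exp (-∑ k ∈ Ico m n, γ k) := by rw [← Real.exp_sum, sum_neg_distrib]

/-- Xu's lemma. -/
theorem tendsto_zero_of_succ_le_one_sub_mul_add {s γ δ : ℕ → ℝ} (hs : ∀ n, 0 ≤ s n)
    (hγ0 : ∀ n, 0 ≤ γ n) (hγ1 : ∀ n, γ n ≤ 1) (hδ0 : ∀ n, 0 ≤ δ n) (hδ : Summable δ)
    (hγ : Tendsto (fun N => ∑ n ∈ range N, γ n) atTop atTop)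
    (hrec : ∀ n, s (n + 1) ≤ (1 - γ n) * s n + δ n) :
    Tendsto s atTop (𝓝 0) := by
  refine tendsto_order.2 ⟨fun ε hε => .of_forall fun n => hε.trans_le (hs n), fun ε hε => ?_⟩
  obtain ⟨m, hm⟩ : ∃ m, ∑' i, δ (i + m) < ε / 2 :=
    ((tendsto_sum_nat_add δ).eventually (gt_mem_nhds (half_pos hε))).exists
  have hprod : ∀ᶠ n in atTop, (∏ k ∈ Ico m n, (1 - γ k)) * s m < ε / 2 := by
    have := (tendsto_prod_Ico_one_sub_nhds_zero hγ1 hγ m).mul_const (s m)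
    rw [zero_mul] at this
    exact this.eventually (gt_mem_nhds (half_pos hε))
  filter_upwards [hprod, eventually_ge_atTop m] with n hn hmn
  have htail : ∑ k ∈ Ico m n, δ k ≤ ∑' i, δ (i + m) := by
    rw [sum_Ico_eq_sum_range]
    simp_rw [add_comm m]
    exact ((summable_nat_add_iff m).2 hδ).sum_le_tsum _ fun i _ => hδ0 _
  linarith [le_prod_mul_add_sum_Ico hγ0 hγ1 hδ0 hrec hmn]

theorem tendsto_zero_of_mul_sq_le {ι : Type*} {l : Filter ι} {g h : ι → ℝ} {c : ℝ} (hc : 0 < c)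
    (hg : ∀ i, 0 ≤ g i) (hgh : ∀ i, c * g i ^ 2 ≤ h i) (hh : Tendsto h l (𝓝 0)) :
    Tendsto g l (𝓝 0) := by
  have hsq : Tendsto (fun i => g i ^ 2) l (𝓝 0) :=
    squeeze_zero (fun i => sq_nonneg _) (fun i => (le_div_iff₀' hc).2 (hgh i))
      (by simpa using hh.div_const c)
  simpa [Real.sqrt_sq (hg _)] using hsq.sqrt

end RealSequences

section Normed

variable {E : Type*} [SeminormedAddCommGroup E]

theorem sq_norm_sub_sq_norm_le {M : ℝ} {u v : E} (hu : ‖u‖ ≤ M) (hv : ‖v‖ ≤ M) :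
    ‖u‖ ^ 2 - ‖v‖ ^ 2 ≤ 2 * M * ‖u - v‖ := by
  nlinarith [norm_sub_norm_le u v, norm_nonneg u, norm_nonneg v, norm_nonneg (u - v),
    mul_nonneg (sub_nonneg.2 (norm_sub_norm_le u v)) (add_nonneg (norm_nonneg u) (norm_nonneg v)),
    mul_nonneg (by linarith : 0 ≤ 2 * M - ‖u‖ - ‖v‖) (norm_nonneg (u - v))]

theorem norm_contraction_sub_le {f : E → E} {ρ M : ℝ} {u q : E} (hρ0 : 0 ≤ ρ) (hρ1 : ρ < 1)
    (hfu : ‖f u - f q‖ ≤ ρ * ‖u - q‖) (hu : ‖u - q‖ ≤ M) (hM : ‖f q - q‖ / (1 - ρ) ≤ M) :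
    ‖f u - q‖ ≤ M := by
  rw [div_le_iff₀ (sub_pos.2 hρ1)] at hM
  nlinarith [norm_sub_le_norm_sub_add_norm_sub (f u) (f q) q, mul_le_mul_of_nonneg_left hu hρ0]

variable [NormedSpace ℝ E]

theorem norm_convexComb_le {s : ℝ} (hs0 : 0 ≤ s) (hs1 : s ≤ 1) (a b : E) :
    ‖s • a + (1 - s) • b‖ ≤ s * ‖a‖ + (1 - s) * ‖b‖ := by
  refine (norm_add_le _ _).trans_eq ?_
  rw [norm_smul, norm_smul, Real.norm_of_nonneg hs0, Real.norm_of_nonneg (sub_nonneg.2 hs1)]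

theorem norm_convexComb_sq_le {s : ℝ} (hs0 : 0 ≤ s) (hs1 : s ≤ 1) (a b : E) :
    ‖s • a + (1 - s) • b‖ ^ 2 ≤ s * ‖a‖ ^ 2 + (1 - s) * ‖b‖ ^ 2 := by
  have h := norm_convexComb_le hs0 hs1 a b
  have hpos : 0 ≤ s * ‖a‖ + (1 - s) * ‖b‖ := by positivity
  nlinarith [pow_le_pow_left₀ (norm_nonneg _) h 2,
    mul_nonneg (mul_nonneg hs0 (sub_nonneg.2 hs1)) (sq_nonneg (‖a‖ - ‖b‖))]

theorem norm_convexComb_sub_convexComb_le {s t : ℝ} (hs0 : 0 ≤ s) (hs1 : s ≤ 1) (a a' b b' : E) :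
    ‖(s • a' + (1 - s) • b') - (t • a + (1 - t) • b)‖
      ≤ s * ‖a' - a‖ + (1 - s) * ‖b' - b‖ + |s - t| * ‖a - b‖ := by
  have hsplit : (s • a' + (1 - s) • b') - (t • a + (1 - t) • b)
      = (s • (a' - a) + (1 - s) • (b' - b)) + (s - t) • (a - b) := by module
  rw [hsplit]
  refine (norm_add_le _ _).trans (add_le_add (norm_convexComb_le hs0 hs1 _ _) ?_)
  rw [norm_smul, Real.norm_eq_abs]

theorem le_of_convexComb_of_norm_sq_le_sub {s c M : ℝ} {q u u' a b : E} (hs0 : 0 ≤ s)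
    (hs1 : s ≤ 1) (hu' : u' = s • a + (1 - s) • b) (ha : ‖a - q‖ ≤ M) (hu : ‖u - q‖ ≤ M)
    (hu'M : ‖u' - q‖ ≤ M) (hb : ‖b - q‖ ^ 2 ≤ ‖u - q‖ ^ 2 - c) :
    c ≤ 2 * M * ‖u' - u‖ + M ^ 2 * s := by
  have hconv : ‖u' - q‖ ^ 2 ≤ s * ‖a - q‖ ^ 2 + (1 - s) * ‖b - q‖ ^ 2 := by
    convert norm_convexComb_sq_le hs0 hs1 (a - q) (b - q) using 3
    rw [hu']; module
  have hdiff := sq_norm_sub_sq_norm_le hu hu'M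
  rw [show (u - q) - (u' - q) = -(u' - u) by abel, norm_neg] at hdiff
  nlinarith [mul_le_mul_of_nonneg_left (pow_le_pow_left₀ (norm_nonneg _) ha 2) hs0,
    mul_le_mul_of_nonneg_left hb (sub_nonneg.2 hs1), sq_nonneg ‖b - q‖]

section Viscosity

variable {Q : Set E} {f : E → E} {T : ℕ → E → E} {x : ℕ → E} {α : ℕ → ℝ} {ρ : ℝ}

theorem viscosity_mem (hQ : Convex ℝ Q) (hf : ∀ u ∈ Q, f u ∈ Q)
    (hT : ∀ n, ∀ u ∈ Q, T n u ∈ Q) (hα0 : ∀ n, 0 ≤ α n) (hα1 : ∀ n, α n ≤ 1) (hx0 : x 0 ∈ Q)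
    (hx : ∀ n, x (n + 1) = α n • f (x n) + (1 - α n) • T n (x n)) (n : ℕ) : x n ∈ Q := by
  induction n with
  | zero => exact hx0
  | succ n ih =>
    rw [hx n]
    exact hQ (hf _ ih) (hT n _ ih) (hα0 n) (sub_nonneg.2 (hα1 n)) (add_sub_cancel _ _)

theorem norm_viscosity_sub_le {q : E} (hα0 : ∀ n, 0 ≤ α n) (hα1 : ∀ n, α n ≤ 1) (hρ0 : 0 ≤ ρ)
    (hρ1 : ρ < 1) (hf : ∀ n, ‖f (x n) - f q‖ ≤ ρ * ‖x n - q‖)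
    (hT : ∀ n, ‖T n (x n) - q‖ ≤ ‖x n - q‖)
    (hx : ∀ n, x (n + 1) = α n • f (x n) + (1 - α n) • T n (x n)) (n : ℕ) :
    ‖x n - q‖ ≤ max ‖x 0 - q‖ (‖f q - q‖ / (1 - ρ)) := by
  induction n with
  | zero => exact le_max_left _ _
  | succ n ih =>
    have hfM := norm_contraction_sub_le hρ0 hρ1 (hf n) ih (le_max_right _ _)
    have hsplit : x (n + 1) - q = α n • (f (x n) - q) + (1 - α n) • (T n (x n) - q) := by
      rw [hx n]; module
    rw [hsplit]
    refine (norm_convexComb_le (hα0 n) (hα1 n) _ _).trans ?_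
    nlinarith [mul_le_mul_of_nonneg_left hfM (hα0 n),
      mul_le_mul_of_nonneg_left ((hT n).trans ih) (sub_nonneg.2 (hα1 n))]

theorem exists_bound_viscosity {q : E} (hα0 : ∀ n, 0 ≤ α n) (hα1 : ∀ n, α n ≤ 1)
    (hρ0 : 0 ≤ ρ) (hρ1 : ρ < 1) (hf : ∀ n, ‖f (x n) - f q‖ ≤ ρ * ‖x n - q‖)
    (hT : ∀ n, ‖T n (x n) - q‖ ≤ ‖x n - q‖)
    (hx : ∀ n, x (n + 1) = α n • f (x n) + (1 - α n) • T n (x n)) :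
    ∃ M, ∀ n, ‖x n - q‖ ≤ M ∧ ‖f (x n) - q‖ ≤ M := by
  have hxM := norm_viscosity_sub_le hα0 hα1 hρ0 hρ1 hf hT hx
  exact ⟨_, fun n => ⟨hxM n, norm_contraction_sub_le hρ0 hρ1 (hf n) (hxM n) (le_max_right _ _)⟩⟩

theorem tendsto_norm_viscosity_succ_sub {e : ℕ → ℝ} {K : ℝ} (hα0 : ∀ n, 0 ≤ α n)
    (hα1 : ∀ n, α n ≤ 1) (hρ0 : 0 ≤ ρ) (hρ1 : ρ < 1)
    (hαdiv : Tendsto (fun N => ∑ n ∈ range N, α n) atTop atTop)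
    (hαvar : Summable fun n => |α (n + 1) - α n|) (he0 : ∀ n, 0 ≤ e n) (he : Summable e)
    (hf : ∀ n, ‖f (x (n + 1)) - f (x n)‖ ≤ ρ * ‖x (n + 1) - x n‖)
    (hT : ∀ n, ‖T (n + 1) (x (n + 1)) - T n (x n)‖ ≤ ‖x (n + 1) - x n‖ + e n)
    (hK : ∀ n, ‖f (x n) - T n (x n)‖ ≤ K)
    (hx : ∀ n, x (n + 1) = α n • f (x n) + (1 - α n) • T n (x n)) :
    Tendsto (fun n => ‖x (n + 1) - x n‖) atTop (𝓝 0) := by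
  have hK0 : 0 ≤ K := (norm_nonneg _).trans (hK 0)
  have hdiv : Tendsto (fun N => ∑ n ∈ range N, α (n + 1) * (1 - ρ)) atTop atTop := by
    refine ((tendsto_atTop_add_const_right _ (-α 0)
      (hαdiv.comp (tendsto_add_atTop_nat 1))).atTop_mul_const (sub_pos.2 hρ1)).congr fun N => ?_
    rw [← sum_mul, Function.comp_apply, sum_range_succ' α N]
    ring
  refine tendsto_zero_of_succ_le_one_sub_mul_add (fun n => norm_nonneg _)
    (fun n => mul_nonneg (hα0 _) (sub_nonneg.2 hρ1.le))
    (fun n => mul_le_one₀ (hα1 _) (sub_nonneg.2 hρ1.le) (by linarith))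
    (fun n => add_nonneg (mul_nonneg (abs_nonneg _) hK0) (he0 n)) ((hαvar.mul_right K).add he)
    hdiv fun n => ?_
  have hstep := norm_convexComb_sub_convexComb_le (t := α n) (hα0 (n + 1)) (hα1 (n + 1))
    (f (x n)) (f (x (n + 1))) (T n (x n)) (T (n + 1) (x (n + 1)))
  rw [← hx, ← hx] at hstep
  nlinarith [mul_le_mul_of_nonneg_left (hf n) (hα0 (n + 1)),
    mul_le_mul_of_nonneg_left (hT n) (sub_nonneg.2 (hα1 (n + 1))),
    mul_le_mul_of_nonneg_left (hK n) (abs_nonneg (α (n + 1) - α n)),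
    mul_nonneg (hα0 (n + 1)) (he0 n)]

end Viscosity

end Normed

section InnerProductSpace

variable {H : Type*} [NormedAddCommGroup H] [InnerProductSpace ℝ H]

theorem mul_norm_le_of_mul_sq_le_inner {ν : ℝ} {d e : H} (h : ν * ‖e‖ ^ 2 ≤ ⟪e, d⟫) :
    ν * ‖e‖ ≤ ‖d‖ := by
  have h' : (ν * ‖e‖) * ‖e‖ ≤ ‖d‖ * ‖e‖ := by
    nlinarith [real_inner_le_norm e d]
  rcases (norm_nonneg e).eq_or_lt with he | he
  · rw [← he, mul_zero]
    exact norm_nonneg d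
  · exact le_of_mul_le_mul_right h' he

theorem norm_sub_smul_sq_le {ν t : ℝ} {d e : H} (h : ν * ‖e‖ ^ 2 ≤ ⟪e, d⟫) (ht : 0 ≤ t) :
    ‖d - t • e‖ ^ 2 ≤ ‖d‖ ^ 2 - t * (2 * ν - t) * ‖e‖ ^ 2 := by
  rw [norm_sub_sq_real, norm_smul, real_inner_smul_right, real_inner_comm, Real.norm_eq_abs,
    mul_pow, sq_abs]
  nlinarith

theorem norm_apply_le_of_inverse_strongly_monotone {Q : Set H} {A : H → H} {ν M : ℝ}
    (hν : 0 < ν) (hA : ∀ x ∈ Q, ∀ y ∈ Q, ν * ‖A x - A y‖ ^ 2 ≤ ⟪A x - A y, x - y⟫) {u q : H}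
    (hu : u ∈ Q) (hq : q ∈ Q) (huM : ‖u - q‖ ≤ M) : ‖A u‖ ≤ M / ν + ‖A q‖ := by
  have h : ν * ‖A u - A q‖ ≤ M := (mul_norm_le_of_mul_sq_le_inner (hA u hu q hq)).trans huM
  rw [mul_comm, ← le_div_iff₀ hν] at h
  linarith [norm_le_norm_add_norm_sub' (A u) (A q)]

section Projection

variable {Q : Set H} {P : H → H}

theorem norm_proj_sub_proj_le (hPmem : ∀ x, P x ∈ Q)
    (hP : ∀ x, ∀ y ∈ Q, ⟪x - P x, y - P x⟫ ≤ 0) (u v : H) : ‖P u - P v‖ ≤ ‖u - v‖ := by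
  have hu := hP u (P v) (hPmem v)
  have hv := hP v (P u) (hPmem u)
  have key : 1 * ‖P u - P v‖ ^ 2 ≤ ⟪P u - P v, u - v⟫ := by
    rw [one_mul, ← real_inner_self_eq_norm_sq]
    simp only [inner_sub_left, inner_sub_right] at hu hv ⊢
    linarith [real_inner_comm u (P v), real_inner_comm u (P u), real_inner_comm v (P u),
      real_inner_comm v (P v), real_inner_comm (P u) (P v)]
  simpa using mul_norm_le_of_mul_sq_le_inner key

theorem proj_eq_of_forall_inner_le_zero (hPmem : ∀ x, P x ∈ Q)
    (hP : ∀ x, ∀ y ∈ Q, ⟪x - P x, y - P x⟫ ≤ 0) {z q : H} (hq : q ∈ Q)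
    (h : ∀ y ∈ Q, ⟪z - q, y - q⟫ ≤ 0) : P z = q := by
  have h₁ := hP z q hq
  have h₂ := h (P z) (hPmem z)
  have hsq : ‖q - P z‖ ^ 2 ≤ 0 := by
    rw [← real_inner_self_eq_norm_sq]
    simp only [inner_sub_left, inner_sub_right] at h₁ h₂ ⊢
    linarith [real_inner_comm z (P z), real_inner_comm z q, real_inner_comm q (P z)]
  exact (sub_eq_zero.1 (norm_eq_zero.1 (pow_eq_zero_iff two_ne_zero |>.1
    (le_antisymm hsq (sq_nonneg _))))).symm

end Projection

def projStep (S P A : H → H) (t : ℝ) (u : H) : H := S (P (u - t • A u))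

section ProjStep

variable {Q : Set H} {S P A : H → H} {ν t : ℝ}

theorem projStep_eq_self (hPmem : ∀ x, P x ∈ Q) (hP : ∀ x, ∀ y ∈ Q, ⟪x - P x, y - P x⟫ ≤ 0)
    {q : H} (hq : q ∈ Q) (hSq : S q = q) (hVI : ∀ x ∈ Q, 0 ≤ ⟪A q, x - q⟫) (ht : 0 ≤ t) :
    projStep S P A t q = q := by
  rw [projStep, proj_eq_of_forall_inner_le_zero hPmem hP hq fun y hy => ?_, hSq]
  rw [sub_sub_cancel_left, inner_neg_left, real_inner_smul_left, neg_nonpos]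
  exact mul_nonneg ht (hVI y hy)

theorem norm_projStep_sub_projStep_sq_le (hPmem : ∀ x, P x ∈ Q)
    (hP : ∀ x, ∀ y ∈ Q, ⟪x - P x, y - P x⟫ ≤ 0) (hS : ∀ x ∈ Q, ∀ y ∈ Q, ‖S x - S y‖ ≤ ‖x - y‖)
    (hA : ∀ x ∈ Q, ∀ y ∈ Q, ν * ‖A x - A y‖ ^ 2 ≤ ⟪A x - A y, x - y⟫) {u v : H} (hu : u ∈ Q)
    (hv : v ∈ Q) (ht : 0 ≤ t) :
    ‖projStep S P A t u - projStep S P A t v‖ ^ 2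
      ≤ ‖u - v‖ ^ 2 - t * (2 * ν - t) * ‖A u - A v‖ ^ 2 := by
  have hle : ‖projStep S P A t u - projStep S P A t v‖ ≤ ‖(u - v) - t • (A u - A v)‖ :=
    calc ‖projStep S P A t u - projStep S P A t v‖
        ≤ ‖P (u - t • A u) - P (v - t • A v)‖ := hS _ (hPmem _) _ (hPmem _)
      _ ≤ ‖(u - t • A u) - (v - t • A v)‖ := norm_proj_sub_proj_le hPmem hP _ _
      _ = ‖(u - v) - t • (A u - A v)‖ := by rw [smul_sub]; abel_nf
  exact (pow_le_pow_left₀ (norm_nonneg _) hle 2).trans (norm_sub_smul_sq_le (hA u hu v hv) ht)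

theorem norm_projStep_sub_projStep_le (hPmem : ∀ x, P x ∈ Q)
    (hP : ∀ x, ∀ y ∈ Q, ⟪x - P x, y - P x⟫ ≤ 0) (hS : ∀ x ∈ Q, ∀ y ∈ Q, ‖S x - S y‖ ≤ ‖x - y‖)
    (hA : ∀ x ∈ Q, ∀ y ∈ Q, ν * ‖A x - A y‖ ^ 2 ≤ ⟪A x - A y, x - y⟫) {u v : H} (hu : u ∈ Q)
    (hv : v ∈ Q) (ht0 : 0 ≤ t) (ht : t ≤ 2 * ν) (s : ℝ) :
    ‖projStep S P A t u - projStep S P A s v‖ ≤ ‖u - v‖ + |t - s| * ‖A v‖ := by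
  have hsame : ‖projStep S P A t u - projStep S P A t v‖ ≤ ‖u - v‖ := by
    refine (pow_le_pow_iff_left₀ (norm_nonneg _) (norm_nonneg _) two_ne_zero).1 ?_
    have := norm_projStep_sub_projStep_sq_le hPmem hP hS hA hu hv ht0
    nlinarith [mul_nonneg (mul_nonneg ht0 (sub_nonneg.2 ht)) (sq_nonneg ‖A u - A v‖)]
  have hvar : ‖projStep S P A t v - projStep S P A s v‖ ≤ |t - s| * ‖A v‖ :=
    calc ‖projStep S P A t v - projStep S P A s v‖
        ≤ ‖P (v - t • A v) - P (v - s • A v)‖ := hS _ (hPmem _) _ (hPmem _)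
      _ ≤ ‖(v - t • A v) - (v - s • A v)‖ := norm_proj_sub_proj_le hPmem hP _ _
      _ = |t - s| * ‖A v‖ := by
        rw [sub_sub_sub_cancel_left, ← sub_smul, norm_smul, Real.norm_eq_abs, abs_sub_comm]
  calc ‖projStep S P A t u - projStep S P A s v‖
      ≤ ‖projStep S P A t u - projStep S P A t v‖ + ‖projStep S P A t v - projStep S P A s v‖ :=
        norm_sub_le_norm_sub_add_norm_sub _ _ _
    _ ≤ ‖u - v‖ + |t - s| * ‖A v‖ := add_le_add hsame hvar

theorem norm_projStep_sub_sq_le (hPmem : ∀ x, P x ∈ Q)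
    (hP : ∀ x, ∀ y ∈ Q, ⟪x - P x, y - P x⟫ ≤ 0) (hS : ∀ x ∈ Q, ∀ y ∈ Q, ‖S x - S y‖ ≤ ‖x - y‖)
    (hA : ∀ x ∈ Q, ∀ y ∈ Q, ν * ‖A x - A y‖ ^ 2 ≤ ⟪A x - A y, x - y⟫) {q u : H} (hq : q ∈ Q)
    (hSq : S q = q) (hVI : ∀ x ∈ Q, 0 ≤ ⟪A q, x - q⟫) (hu : u ∈ Q) (ht : 0 ≤ t) :
    ‖projStep S P A t u - q‖ ^ 2 ≤ ‖u - q‖ ^ 2 - t * (2 * ν - t) * ‖A u - A q‖ ^ 2 := by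
  simpa only [projStep_eq_self hPmem hP hq hSq hVI ht] using
    norm_projStep_sub_projStep_sq_le hPmem hP hS hA hu hq ht

theorem norm_projStep_sub_le (hPmem : ∀ x, P x ∈ Q)
    (hP : ∀ x, ∀ y ∈ Q, ⟪x - P x, y - P x⟫ ≤ 0) (hS : ∀ x ∈ Q, ∀ y ∈ Q, ‖S x - S y‖ ≤ ‖x - y‖)
    (hA : ∀ x ∈ Q, ∀ y ∈ Q, ν * ‖A x - A y‖ ^ 2 ≤ ⟪A x - A y, x - y⟫) {q u : H} (hq : q ∈ Q)
    (hSq : S q = q) (hVI : ∀ x ∈ Q, 0 ≤ ⟪A q, x - q⟫) (hu : u ∈ Q) (ht0 : 0 ≤ t)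
    (ht : t ≤ 2 * ν) : ‖projStep S P A t u - q‖ ≤ ‖u - q‖ := by
  simpa only [projStep_eq_self hPmem hP hq hSq hVI ht0, sub_self, abs_zero, zero_mul,
    add_zero] using norm_projStep_sub_projStep_le hPmem hP hS hA hu hq ht0 ht t

end ProjStep

end InnerProductSpace

theorem stmt_16_general {H : Type*} [NormedAddCommGroup H] [InnerProductSpace ℝ H]
    (Q : Set H) (hQconvex : Convex ℝ Q)
    (ν : ℝ)
    (A : H → H) (hA : ∀ x ∈ Q, ∀ y ∈ Q, ν * ‖A x - A y‖ ^ 2 ≤ ⟪A x - A y, x - y⟫)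
    (P : H → H) (hPmem : ∀ x, P x ∈ Q)
    (hP : ∀ (x : H), ∀ y ∈ Q, ⟪x - P x, y - P x⟫ ≤ 0)
    (S : H → H) (hSmem : ∀ x ∈ Q, S x ∈ Q)
    (hS : ∀ x ∈ Q, ∀ y ∈ Q, ‖S x - S y‖ ≤ ‖x - y‖)
    (ρ : ℝ) (hρ : ρ ∈ Set.Ico (0 : ℝ) 1)
    (f : H → H) (hfmem : ∀ x ∈ Q, f x ∈ Q)
    (hf : ∀ x ∈ Q, ∀ y ∈ Q, ‖f x - f y‖ ≤ ρ * ‖x - y‖)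
    (Ω : Set H)
    (hΩ : Ω = {x : H | x ∈ Q ∧ S x = x} ∩ {q : H | q ∈ Q ∧ ∀ x ∈ Q, 0 ≤ ⟪A q, x - q⟫})
    (a b : ℝ) (hab : 0 < a ∧ a < b ∧ b < 2 * ν)
    (α lam : ℕ → ℝ)
    (hα : ∀ n, α n ∈ Set.Ioc (0 : ℝ) 1) (hlam : ∀ n, lam n ∈ Set.Icc a b)
    (hα0 : Filter.Tendsto α Filter.atTop (nhds 0))
    (hαdiv : Filter.Tendsto (fun N => ∑ n ∈ Finset.range N, α n) Filter.atTop Filter.atTop)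
    (hαvar : Summable (fun n => |α (n + 1) - α n|))
    (hlamvar : Summable (fun n => |lam (n + 1) - lam n|))
    (x : ℕ → H) (hx0 : x 0 ∈ Q)
    (hxrec : ∀ n, x (n + 1) = α n • f (x n) + (1 - α n) • S (P (x n - lam n • A (x n)))) :
    ∀ q ∈ Ω, Filter.Tendsto (fun n => ‖A (x n) - A q‖) Filter.atTop (nhds 0) := by
  intro q hq
  obtain ⟨⟨hqQ, hSq⟩, -, hVI⟩ := hΩ ▸ hq
  obtain ⟨ha, hab, hb⟩ := hab
  have hαnn n : 0 ≤ α n := (hα n).1.le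
  have hα1 n : α n ≤ 1 := (hα n).2
  have hlam0 n : 0 ≤ lam n := ha.le.trans (hlam n).1
  have hlam2ν n : lam n ≤ 2 * ν := (hlam n).2.trans hb.le
  have hxT : ∀ n, x (n + 1) = α n • f (x n) + (1 - α n) • projStep S P A (lam n) (x n) :=
    hxrec
  have hxQ := viscosity_mem hQconvex hfmem (fun n u _ => hSmem _ (hPmem _)) hαnn hα1 hx0 hxT
  have hTx n := norm_projStep_sub_le hPmem hP hS hA hqQ hSq hVI (hxQ n) (hlam0 n) (hlam2ν n)
  obtain ⟨M, hM⟩ := exists_bound_viscosity hαnn hα1 hρ.1 hρ.2 (fun n => hf _ (hxQ n) _ hqQ)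
    hTx hxT
  have hAM n : ‖A (x n)‖ ≤ M / ν + ‖A q‖ :=
    norm_apply_le_of_inverse_strongly_monotone (by linarith) hA (hxQ n) hqQ (hM n).1
  have hd := tendsto_norm_viscosity_succ_sub (K := 2 * M)
    (e := fun n => |lam (n + 1) - lam n| * (M / ν + ‖A q‖)) hαnn hα1 hρ.1 hρ.2 hαdiv hαvar
    (fun n => mul_nonneg (abs_nonneg _) ((norm_nonneg _).trans (hAM 0))) (hlamvar.mul_right _)
    (fun n => hf _ (hxQ _) _ (hxQ _))
    (fun n => (norm_projStep_sub_projStep_le hPmem hP hS hA (hxQ (n + 1)) (hxQ n) (hlam0 _)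
      (hlam2ν _) (lam n)).trans (by gcongr; exact hAM n))
    (fun n => (norm_sub_le_norm_sub_add_norm_sub _ q _).trans
      (by rw [norm_sub_rev q]; linarith [hM n, (hTx n).trans (hM n).1]))
    hxT
  have hkey n : a * (2 * ν - b) * ‖A (x n) - A q‖ ^ 2
      ≤ 2 * M * ‖x (n + 1) - x n‖ + M ^ 2 * α n := by
    obtain ⟨hal, hlb⟩ := hlam n
    have hab' : a * (2 * ν - b) ≤ lam n * (2 * ν - lam n) :=
      mul_le_mul hal (by linarith) (by linarith) (hlam0 n)
    exact (mul_le_mul_of_nonneg_right hab' (sq_nonneg _)).trans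
      (le_of_convexComb_of_norm_sq_le_sub (hαnn n) (hα1 n) (hxT n) (hM n).2 (hM n).1
        (hM (n + 1)).1 (norm_projStep_sub_sq_le hPmem hP hS hA hqQ hSq hVI (hxQ n) (hlam0 n)))
  exact tendsto_zero_of_mul_sq_le (mul_pos ha (by linarith)) (fun n => norm_nonneg _) hkey
    (by simpa using (hd.const_mul (2 * M)).add (hα0.const_mul (M ^ 2)))

/-- Under the summability conditions, `‖A x_n - A q‖ → 0` for every `q ∈ Ω`. -/
theorem stmt_16 {H : Type*} [NormedAddCommGroup H] [InnerProductSpace ℝ H] [CompleteSpace H]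
    (Q : Set H) (hQne : Q.Nonempty) (hQclosed : IsClosed Q) (hQconvex : Convex ℝ Q)
    (ν : ℝ) (hν : 0 < ν)
    (A : H → H) (hA : ∀ x ∈ Q, ∀ y ∈ Q, ν * ‖A x - A y‖ ^ 2 ≤ ⟪A x - A y, x - y⟫)
    (P : H → H) (hPmem : ∀ x, P x ∈ Q)
    (hP : ∀ (x : H), ∀ y ∈ Q, ⟪x - P x, y - P x⟫ ≤ 0)
    (S : H → H) (hSmem : ∀ x ∈ Q, S x ∈ Q)
    (hS : ∀ x ∈ Q, ∀ y ∈ Q, ‖S x - S y‖ ≤ ‖x - y‖)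
    (ρ : ℝ) (hρ : ρ ∈ Set.Ico (0 : ℝ) 1)
    (f : H → H) (hfmem : ∀ x ∈ Q, f x ∈ Q)
    (hf : ∀ x ∈ Q, ∀ y ∈ Q, ‖f x - f y‖ ≤ ρ * ‖x - y‖)
    (Ω : Set H)
    (hΩ : Ω = {x : H | x ∈ Q ∧ S x = x} ∩ {q : H | q ∈ Q ∧ ∀ x ∈ Q, 0 ≤ ⟪A q, x - q⟫})
    (hΩne : Ω.Nonempty)
    (a b : ℝ) (hab : 0 < a ∧ a < b ∧ b < 2 * ν)
    (α lam : ℕ → ℝ)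
    (hα : ∀ n, α n ∈ Set.Ioc (0 : ℝ) 1) (hlam : ∀ n, lam n ∈ Set.Icc a b)
    (hα0 : Filter.Tendsto α Filter.atTop (nhds 0))
    (hαdiv : Filter.Tendsto (fun N => ∑ n ∈ Finset.range N, α n) Filter.atTop Filter.atTop)
    (hαvar : Summable (fun n => |α (n + 1) - α n|))
    (hlamvar : Summable (fun n => |lam (n + 1) - lam n|))
    (x : ℕ → H) (hx0 : x 0 ∈ Q)
    (hxrec : ∀ n, x (n + 1) = α n • f (x n) + (1 - α n) • S (P (x n - lam n • A (x n)))) :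
    ∀ q ∈ Ω, Filter.Tendsto (fun n => ‖A (x n) - A q‖) Filter.atTop (nhds 0) :=
  stmt_16_general Q hQconvex ν A hA P hPmem hP S hSmem hS ρ hρ f hfmem hf Ω hΩ a b hab α lam hα hlam
    hα0 hαdiv hαvar hlamvar x hx0 hxrec
end
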